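/- Each selection made by the 1/3-approximate greedy algorithm can conflict with (i.e., share a robot or a target with) at most three assignments of the optimal solution in the heterogeneous setting, where a greedy pair of limited robots can block two optimal pairs plus the assignment of its chosen target. -/

import Mathlib

open Finset

/-- The sufficient-sensing robots used by an assignable unit
(a sufficient robot or a pair of limited robots). -/
def robotsS {Rs Rl : Type*} [DecidableEq Rs] : Rs ⊕ (Rl × Rl) → Finset Rs
  | Sum.inl r => {r}
  | Sum.inr _ => ∅

/-- The limited-sensing robots used by an assignable unit. -/
def robotsL {Rs Rl : Type*} [DecidableEq Rl] : Rs ⊕ (Rl × Rl) → Finset Rl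
  | Sum.inl _ => ∅
  | Sum.inr (a, b) => {a, b}

/-- A (unit, target) assignment is valid if a pair-unit consists of two distinct
limited robots. -/
def ValidAsg {Rs Rl T : Type*} (p : (Rs ⊕ (Rl × Rl)) × T) : Prop :=
  ∀ a b, p.1 = Sum.inr (a, b) → a ≠ b

/-- Two assignments conflict if they share a target or share a robot. -/
def ConflictAsg {Rs Rl T : Type*} [DecidableEq Rs] [DecidableEq Rl]
    (p q : (Rs ⊕ (Rl × Rl)) × T) : Prop :=
  p.2 = q.2 ∨ ¬ Disjoint (robotsS p.1) (robotsS q.1) ∨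
    ¬ Disjoint (robotsL p.1) (robotsL q.1)

/-!
An assignment uses at most three resources (its target and at most two robots), and two
assignments conflict exactly when they share a resource. Every member of a conflict-free family
conflicting with `p` therefore uses one of the resources of `p`, and no two members use the same
one, so there are at most three of them.
-/

theorem Finset.disjoint_disjSum_disjSum_iff {α β : Type*} {s₁ s₂ : Finset α}
    {t₁ t₂ : Finset β} :
    Disjoint (s₁.disjSum t₁) (s₂.disjSum t₂) ↔ Disjoint s₁ s₂ ∧ Disjoint t₁ t₂ := by
  simp only [disjoint_left, Sum.forall, inl_mem_disjSum, inr_mem_disjSum]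

theorem Finset.card_le_card_of_pairwiseDisjoint_of_forall_not_disjoint {ι α : Type*}
    {A : Finset ι} {f : ι → Finset α} {S : Finset α} (hf : (A : Set ι).PairwiseDisjoint f)
    (hS : ∀ i ∈ A, ¬ Disjoint S (f i)) : A.card ≤ S.card :=
  card_le_card_of_forall_subsingleton (fun i x => x ∈ f i)
    (fun i hi => not_disjoint_iff.1 (hS i hi))
    fun x _ _ hi _ hj => hf.elim hi.1 hj.1 (not_disjoint_iff.2 ⟨x, hi.2, hj.2⟩)

section Assignments

variable {Rs Rl T : Type*} [DecidableEq Rs] [DecidableEq Rl]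

def resources (q : (Rs ⊕ (Rl × Rl)) × T) : Finset (T ⊕ Rs ⊕ Rl) :=
  ({q.2} : Finset T).disjSum ((robotsS q.1).disjSum (robotsL q.1))

theorem conflictAsg_iff_not_disjoint_resources (p q : (Rs ⊕ (Rl × Rl)) × T) :
    ConflictAsg p q ↔ ¬ Disjoint (resources p) (resources q) := by
  simp only [ConflictAsg, resources, disjoint_disjSum_disjSum_iff, disjoint_singleton,
    not_and_or, not_not]

theorem card_robotsS_add_card_robotsL_le_two (u : Rs ⊕ (Rl × Rl)) :
    (robotsS u).card + (robotsL u).card ≤ 2 := by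
  rcases u with r | ⟨a, b⟩
  · simp [robotsS, robotsL]
  · simpa [robotsS, robotsL] using card_insert_le a {b}

theorem card_resources_le_three (q : (Rs ⊕ (Rl × Rl)) × T) : (resources q).card ≤ 3 := by
  have := card_robotsS_add_card_robotsL_le_two q.1
  simp only [resources, card_disjSum, card_singleton]
  omega

end Assignments

theorem greedy_selection_conflicts_at_most_three_general {Rs Rl T : Type*}
    [DecidableEq Rs] [DecidableEq Rl]
    (p : (Rs ⊕ (Rl × Rl)) × T)
    (A : Finset ((Rs ⊕ (Rl × Rl)) × T))
    (hdisj : ∀ a ∈ A, ∀ b ∈ A, a ≠ b → ¬ ConflictAsg a b)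
    (hconf : ∀ a ∈ A, ConflictAsg p a) :
    A.card ≤ 3 := by
  have hres : (A : Set _).PairwiseDisjoint resources := fun a ha b hb hab =>
    not_not.1 fun h => hdisj a ha b hb hab ((conflictAsg_iff_not_disjoint_resources a b).2 h)
  calc A.card ≤ (resources p).card :=
        card_le_card_of_pairwiseDisjoint_of_forall_not_disjoint hres
          fun a ha => (conflictAsg_iff_not_disjoint_resources p a).1 (hconf a ha)
    _ ≤ 3 := card_resources_le_three p

/-- In the heterogeneous setting, any single (greedy) assignment conflicts with at
most three pairwise robot- and target-disjoint assignments: a pair of limited robots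
can block two optimal pairs plus the assignment of its chosen target. -/
theorem greedy_selection_conflicts_at_most_three {Rs Rl T : Type*}
    [DecidableEq Rs] [DecidableEq Rl] [DecidableEq T]
    (p : (Rs ⊕ (Rl × Rl)) × T) (hp : ValidAsg p)
    (A : Finset ((Rs ⊕ (Rl × Rl)) × T))
    (hA : ∀ a ∈ A, ValidAsg a)
    (hdisj : ∀ a ∈ A, ∀ b ∈ A, a ≠ b → ¬ ConflictAsg a b)
    (hconf : ∀ a ∈ A, ConflictAsg p a) :
    A.card ≤ 3 :=
  greedy_selection_conflicts_at_most_three_general p A hdisj hconf
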